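/- The fundamental-groupoid realization functor $k_!$ on simplicial sets, the left Kan extension along $\Delta^n \mapsto B\pi(\Delta^n)$, preserves monomorphisms of simplicial sets. -/

import Mathlib

open CategoryTheory CategoryTheory.Limits Simplicial Opposite

/-- The chaotic (indiscrete) category on a type: exactly one morphism between
any two objects. -/
def Chaotic (α : Type) : Type := α

instance {α : Type} : Category (Chaotic α) where
  Hom _ _ := Unit
  id _ := ⟨⟩
  comp _ _ := ⟨⟩

/-- Any function induces a functor between chaotic categories. -/
def chaoticMap {α β : Type} (f : α → β) : Chaotic α ⥤ Chaotic β where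
  obj := f
  map _ := ⟨⟩

instance {α : Type} (a b : Chaotic α) : Subsingleton (a ⟶ b) :=
  inferInstanceAs (Subsingleton Unit)

lemma chaoticFunctor_ext {α : Type} {C : Type} [Category C] (F G : C ⥤ Chaotic α)
    (h : ∀ X, F.obj X = G.obj X) : F = G :=
  CategoryTheory.Functor.ext h (fun _ _ _ => Subsingleton.elim _ _)

/-- The chaotic categories, as a cosimplicial category. -/
def chaoticCosimplicial : SimplexCategory ⥤ Cat where
  obj n := Cat.of (Chaotic (Fin (n.len + 1)))
  map f := (chaoticMap f.toOrderHom).toCatHom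
  map_id n := Cat.ext (chaoticFunctor_ext _ _ (fun _ => rfl))
  map_comp f g := Cat.ext (chaoticFunctor_ext _ _ (fun _ => rfl))

/-- The cosimplicial simplicial set `[n] ↦ B π (Δⁿ)`, the nerve of the chaotic
groupoid on `n + 1` objects (the nerve of the fundamental groupoid of `Δⁿ`). -/
def Bpi : SimplexCategory ⥤ SSet := chaoticCosimplicial ⋙ nerveFunctor

lemma chaoticCA_ext {k m : ℕ} (F G : ComposableArrows (Chaotic (Fin (k + 1))) m)
    (h : ∀ i, F.obj i = G.obj i) : F = G :=
  CategoryTheory.Functor.ext h (fun _ _ _ => Subsingleton.elim _ _)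

/-- The simplex of `B π (Δⁿ)` corresponding to a simplex of `Δⁿ`. -/
def simplexToChaotic {n : SimplexCategory} {m : SimplexCategoryᵒᵖ}
    (x : (SSet.stdSimplex.obj n).obj m) : (Bpi.obj n).obj m where
  obj i := (SSet.stdSimplex.objEquiv x).toOrderHom i
  map _ := ⟨⟩
  map_id _ := rfl
  map_comp _ _ := rfl

lemma Bpi_obj_map_obj {n : SimplexCategory} {m m' : SimplexCategoryᵒᵖ} (g : m ⟶ m')
    (x : (Bpi.obj n).obj m) (i : Fin (m'.unop.len + 1)) :
    ((Bpi.obj n).map g x).obj i = x.obj (g.unop.toOrderHom i) := rfl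

lemma Bpi_map_app_obj {a b : SimplexCategory} (f : a ⟶ b) {m : SimplexCategoryᵒᵖ}
    (x : (Bpi.obj a).obj m) (i : Fin (m.unop.len + 1)) :
    (((Bpi.map f).app m) x).obj i = f.toOrderHom (x.obj i) := rfl

/-- The natural inclusion `Δⁿ → B π (Δⁿ)`. -/
def stdToBpi : SSet.stdSimplex ⟶ Bpi where
  app n :=
    { app := fun _ => TypeCat.ofHom fun x => simplexToChaotic x
      naturality := fun m m' g => by
        apply ConcreteCategory.hom_ext; intro x
        apply chaoticCA_ext
        intro i
        rfl }
  naturality a b f := by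
    apply NatTrans.ext; funext m; apply ConcreteCategory.hom_ext; intro x
    apply chaoticCA_ext
    intro i
    rfl

/-- The fundamental `n`-simplex of `B π (Δⁿ)` (the string of arrows `0 → 1 → ⋯ → n`). -/
def spineEl (n : SimplexCategory) : (Bpi.obj n).obj (op n) where
  obj i := i
  map _ := ⟨⟩
  map_id _ := rfl
  map_comp _ _ := rfl

lemma spineEl_natural {a b : SimplexCategory} (f : a ⟶ b) :
    ((Bpi.map f).app (op a)) (spineEl a) = (Bpi.obj b).map f.op (spineEl b) := by
  apply chaoticCA_ext
  intro i
  rfl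

/-- The functor `k^!`, with `k^!(X)_n = Hom(Bπ(Δⁿ), X)`. -/
def kSh (X : SSet) : SSet where
  obj n := Bpi.obj n.unop ⟶ X
  map f := TypeCat.ofHom fun g => Bpi.map f.unop ≫ g
  map_id n := by apply ConcreteCategory.hom_ext; intro g; simp
  map_comp f g := by apply ConcreteCategory.hom_ext; intro h; simp

/-- `k^!` as a functor. -/
def kShF : SSet ⥤ SSet where
  obj := kSh
  map q := { app := fun _ => TypeCat.ofHom fun g => g ≫ q
             naturality := fun _ _ f => by apply ConcreteCategory.hom_ext; intro g; exact Category.assoc (Bpi.map f.unop) g q }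

/-- The canonical map `k^!(X) ⟶ X` induced by the inclusions `Δⁿ ⊆ Bπ(Δⁿ)`. -/
def kCan (X : SSet) : kSh X ⟶ X where
  app n := TypeCat.ofHom fun g => g.app n (spineEl n.unop)
  naturality n n' f := by
    apply ConcreteCategory.hom_ext; intro g
    exact (congr_arg (fun y => g.app n' y) (spineEl_natural f.unop)).trans
      (ConcreteCategory.congr_hom (g.naturality f) (spineEl n.unop))

/-- An edge of a simplicial set is invertible if its classifying map extends along
`Δ¹ ⊆ Bπ(Δ¹)` (for a quasi-category this says precisely that the edge is invertible
in the homotopy category). -/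
def invEdge (X : SSet) (e : X.obj (op (SimplexCategory.mk 1))) : Prop :=
  ∃ g : Bpi.obj (SimplexCategory.mk 1) ⟶ X,
    g.app (op (SimplexCategory.mk 1)) (spineEl (SimplexCategory.mk 1)) = e

/-- The subcomplex `J(X) ⊆ X` of simplices all of whose edges are invertible;
for a quasi-category `X` this is the maximal Kan subcomplex. -/
def Jmax (X : SSet) : SSet where
  obj m := { x : X.obj m // ∀ f : SimplexCategory.mk 1 ⟶ m.unop, invEdge X (X.map f.op x) }
  map {m m'} g := TypeCat.ofHom fun x => ⟨X.map g x.1, fun f => by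
    have h : X.map f.op (X.map g x.1) = X.map ((f ≫ g.unop).op) x.1 := by
      rw [op_comp, Quiver.Hom.op_unop, FunctorToTypes.map_comp_apply]
    rw [h]
    exact x.2 (f ≫ g.unop)⟩
  map_id m := by apply ConcreteCategory.hom_ext; intro x; apply Subtype.ext; simp
  map_comp f g := by apply ConcreteCategory.hom_ext; intro x; apply Subtype.ext; simp

/-- The inclusion `J(X) ⊆ X`. -/
def Jincl (X : SSet) : Jmax X ⟶ X where
  app _ := TypeCat.ofHom fun x => x.1
  naturality _ _ _ := rfl

/-- Functoriality of `J`. -/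
def Jmap {X Y : SSet} (q : X ⟶ Y) : Jmax X ⟶ Jmax Y where
  app m := TypeCat.ofHom fun x => ⟨q.app m x.1, fun f => by
    obtain ⟨g, hg⟩ := x.2 f
    exact ⟨g ≫ q, by
      show q.app _ (g.app _ _) = _
      rw [hg]
      exact ConcreteCategory.congr_hom (q.naturality f.op) x.1⟩⟩
  naturality m m' g := by
    apply ConcreteCategory.hom_ext; intro x
    apply Subtype.ext
    exact ConcreteCategory.congr_hom (q.naturality g) x.1

/-- The canonical map `k^!(X) ⟶ J(X)`. -/
def kCanJ (X : SSet) : kSh X ⟶ Jmax X where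
  app n := TypeCat.ofHom fun g => ⟨g.app n (spineEl n.unop), fun f => by
    refine ⟨Bpi.map f ≫ g, ?_⟩
    exact (congr_arg (fun y => g.app _ y) (spineEl_natural f)).trans
      (ConcreteCategory.congr_hom (g.naturality f.op) (spineEl n.unop))⟩
  naturality n n' f := by
    apply ConcreteCategory.hom_ext; intro g
    apply Subtype.ext
    exact (congr_arg (fun y => g.app n' y) (spineEl_natural f.unop)).trans
      (ConcreteCategory.congr_hom (g.naturality f) (spineEl n.unop))

/-- Kan fibrations: right lifting property against all horn inclusions. -/
def IsKanFib {X Y : SSet} (q : X ⟶ Y) : Prop :=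
  ∀ ⦃n : ℕ⦄ ⦃i : Fin (n + 1)⦄, HasLiftingProperty (SSet.horn n i).ι q

/-- Trivial Kan fibrations: right lifting property against all boundary inclusions. -/
def IsTrivFib {X Y : SSet} (q : X ⟶ Y) : Prop :=
  ∀ ⦃n : ℕ⦄, HasLiftingProperty (SSet.boundary n).ι q

noncomputable section

instance {m : SimplexCategoryᵒᵖ} : Subsingleton (Δ[0].obj m) := by
  constructor
  intro a b
  apply SSet.stdSimplex.objEquiv.injective
  ext i
  exact congr_arg Fin.val (Subsingleton.elim (α := Fin 1) _ _)

/-- The unique map to the terminal simplicial set `Δ[0]`. -/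
def toPt (X : SSet) : X ⟶ Δ[0] where
  app m := TypeCat.ofHom fun _ => SSet.stdSimplex.objMk (OrderHom.const _ 0)
  naturality _ _ _ := by apply ConcreteCategory.hom_ext; intro x; apply Subsingleton.elim

lemma toPt_unique {X : SSet} (f g : X ⟶ Δ[0]) : f = g :=
  NatTrans.ext (funext fun m => ConcreteCategory.hom_ext _ _ fun x => Subsingleton.elim _ _)

/-- An interval object: a simplicial set with two chosen endpoints. -/
structure SInterval where
  I : SSet
  e0 : Δ[0] ⟶ I
  e1 : Δ[0] ⟶ I

/-- Homotopy of maps `X ⟶ Z` with respect to the cylinder `X × I`. -/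
def SHtpy (c : SInterval) {X Z : SSet} (u v : X ⟶ Z) : Prop :=
  ∃ H : Limits.prod X c.I ⟶ Z,
    Limits.prod.lift (𝟙 X) (toPt X ≫ c.e0) ≫ H = u ∧
    Limits.prod.lift (𝟙 X) (toPt X ≫ c.e1) ≫ H = v

/-- Homotopy classes of maps `X ⟶ Z`. -/
def hoClasses (c : SInterval) (X Z : SSet) : Type :=
  Quot (SHtpy c (X := X) (Z := Z))

lemma lift_map_endpoint {X Y I : SSet} (f : X ⟶ Y) (e : Δ[0] ⟶ I) :
    Limits.prod.lift (𝟙 X) (toPt X ≫ e) ≫ Limits.prod.map f (𝟙 I) =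
      f ≫ Limits.prod.lift (𝟙 Y) (toPt Y ≫ e) := by
  have h : toPt X = f ≫ toPt Y := toPt_unique _ _
  rw [Limits.prod.lift_map, Limits.prod.comp_lift, h]
  simp

/-- Precomposition on homotopy classes. -/
def hoPrecomp (c : SInterval) {X Y : SSet} (f : X ⟶ Y) (Z : SSet) :
    hoClasses c Y Z → hoClasses c X Z :=
  Quot.map (fun u => f ≫ u) (fun u v h => by
    obtain ⟨H, h0, h1⟩ := h
    exact ⟨Limits.prod.map f (𝟙 c.I) ≫ H,
      by rw [← Category.assoc, lift_map_endpoint, Category.assoc, h0],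
      by rw [← Category.assoc, lift_map_endpoint, Category.assoc, h1]⟩)

/-- The Kan–Quillen interval `Δ¹`. -/
def kanSInterval : SInterval :=
  ⟨Δ[1], SSet.stdSimplex.map (SimplexCategory.δ 1),
    SSet.stdSimplex.map (SimplexCategory.δ 0)⟩

/-- The Joyal interval `E¹ = Bπ(Δ¹)`, the nerve of the free-standing isomorphism. -/
def joyalSInterval : SInterval :=
  ⟨Bpi.obj (SimplexCategory.mk 1),
    stdToBpi.app (SimplexCategory.mk 0) ≫ Bpi.map (SimplexCategory.δ 1),
    stdToBpi.app (SimplexCategory.mk 0) ≫ Bpi.map (SimplexCategory.δ 0)⟩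

/-- Weak homotopy equivalences (equivalences in the Kan–Quillen model structure),
characterized by homotopy classes of maps into Kan complexes. -/
def IsWeakEquiv {X Y : SSet} (f : X ⟶ Y) : Prop :=
  ∀ Z : SSet, SSet.KanComplex Z → Function.Bijective (hoPrecomp kanSInterval f Z)

/-- Weak categorical (Joyal) equivalences, characterized by `E¹`-homotopy classes of
maps into quasi-categories. -/
def IsJoyalEquiv {X Y : SSet} (f : X ⟶ Y) : Prop :=
  ∀ Z : SSet, SSet.Quasicategory Z → Function.Bijective (hoPrecomp joyalSInterval f Z)

/-- Fibrations in the Joyal model structure: right lifting property against all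
trivial cofibrations (monomorphisms which are Joyal equivalences). -/
def IsJoyalFib {X Y : SSet} (q : X ⟶ Y) : Prop :=
  ∀ ⦃A B : SSet⦄ (i : A ⟶ B), Mono i → IsJoyalEquiv i → HasLiftingProperty i q

end

/-!
A colimit-preserving functor out of simplicial sets is determined by its values on the
standard simplices, so `k` is isomorphic to the explicit left adjoint of `k^!`: an
`m`-simplex of `k₁ X` is a pair `(x, u)` of a `p`-simplex `x` of `X` and an arbitrary
(not necessarily monotone) map `u : [m] → [p]`, modulo `(α^* x, u) ~ (x, α ∘ u)`.
Factoring `u` through its image and taking the Eilenberg–Zilber decomposition of the face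
of `x` spanned by that image yields a normal form: a nondegenerate simplex together with a
surjection onto its vertices. It is an invariant of the class, and for `X ⊆ Y` it is the
same whether computed in `X` or in `Y`; hence `k₁` preserves monomorphisms.

As for the universe of the source: `k` preserves binary coproducts and `k(Δ⁰) ≅ Bπ(Δ⁰)`
has two distinct maps out of it, so the coproduct inclusions `Δ⁰ ⟶ ∐_S Δ⁰` stay distinct
under `k`. Thus every type of the source universe is small, and everything reduces to
universe `0`.
-/

universe u v w

open Function SSet

namespace SimplexCategory

variable {m p : ℕ}

noncomputable def rangeDim (u : Fin (m + 1) → Fin (p + 1)) : ℕ :=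
  (Finset.univ.image u).card - 1

lemma card_image_eq_rangeDim_add_one (u : Fin (m + 1) → Fin (p + 1)) :
    (Finset.univ.image u).card = rangeDim u + 1 :=
  (Nat.succ_pred_eq_of_pos (Finset.card_pos.2 (Finset.univ_nonempty.image u))).symm

noncomputable def rangeOrderIso (u : Fin (m + 1) → Fin (p + 1)) :
    Fin (rangeDim u + 1) ≃o Finset.univ.image u :=
  (Finset.univ.image u).orderIsoOfFin (card_image_eq_rangeDim_add_one u)

noncomputable def rangeIncl (u : Fin (m + 1) → Fin (p + 1)) : ⦋rangeDim u⦌ ⟶ ⦋p⦌ :=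
  Hom.mk ⟨fun j => (rangeOrderIso u j).1, fun _ _ h => (rangeOrderIso u).monotone h⟩

noncomputable def toRange (u : Fin (m + 1) → Fin (p + 1)) (a : Fin (m + 1)) :
    Fin (rangeDim u + 1) :=
  (rangeOrderIso u).symm ⟨u a, Finset.mem_image_of_mem u (Finset.mem_univ a)⟩

instance (u : Fin (m + 1) → Fin (p + 1)) : Mono (rangeIncl u) := by
  rw [mono_iff_injective]
  exact fun _ _ h => (rangeOrderIso u).injective (Subtype.ext h)

lemma surjective_toRange (u : Fin (m + 1) → Fin (p + 1)) : Surjective (toRange u) := by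
  intro j
  obtain ⟨a, -, ha⟩ := Finset.mem_image.1 (rangeOrderIso u j).2
  exact ⟨a, by simp [toRange, ha]⟩

lemma rangeIncl_comp_toRange (u : Fin (m + 1) → Fin (p + 1)) :
    ⇑(rangeIncl u).toOrderHom ∘ toRange u = u := by
  funext a
  change ((rangeOrderIso u) ((rangeOrderIso u).symm _)).1 = u a
  simp

lemma exists_epi_comp_eq {k k' q : ℕ} (θ : ⦋k⦌ ⟶ ⦋q⦌) (ι : ⦋k'⦌ ⟶ ⦋q⦌) [Mono ι]
    {s : Fin (m + 1) → Fin (k + 1)} {s' : Fin (m + 1) → Fin (k' + 1)}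
    (hs : Surjective s) (hs' : Surjective s') (h : ⇑θ.toOrderHom ∘ s = ⇑ι.toOrderHom ∘ s') :
    ∃ σ : ⦋k⦌ ⟶ ⦋k'⦌, Epi σ ∧ σ ≫ ι = θ ∧ s' = ⇑σ.toOrderHom ∘ s := by
  have hι : StrictMono ι.toOrderHom :=
    ι.toOrderHom.monotone.strictMono_of_injective (mono_iff_injective.1 inferInstance)
  have hθ (j : Fin (k + 1)) : ∃ j', ι.toOrderHom j' = θ.toOrderHom j := by
    obtain ⟨a, rfl⟩ := hs j
    exact ⟨s' a, (congr_fun h a).symm⟩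
  choose σ hσ using hθ
  have hσs : s' = σ ∘ s := funext fun a => hι.injective ((hσ _).trans (congr_fun h a)).symm
  refine ⟨Hom.mk ⟨σ, fun j j' hj => hι.le_iff_le.1 ?_⟩, ?_, ?_, hσs⟩
  · rw [hσ, hσ]
    exact θ.toOrderHom.monotone hj
  · rw [epi_iff_surjective]
    intro j'
    obtain ⟨a, rfl⟩ := hs' j'
    exact ⟨s a, (congr_fun hσs a).symm⟩
  · ext j : 3
    exact hσ j

end SimplexCategory

namespace SSet.S

variable {X : SSet.{u}}

/-- The vertex maps are compared in `ℕ`, as `y.toN.dim` and `n` are only propositionally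
equal. -/
lemma toN_eq_and_toNπ_val_eq (y : X.S) {n : ℕ} (z : X _⦋n⦌) (hz : z ∈ X.nonDegenerate n)
    (g : ⦋y.dim⦌ ⟶ ⦋n⦌) [Epi g] (h : X.map g.op z = y.simplex) :
    y.toN = N.mk z hz ∧ ∀ j, (y.toNπ.toOrderHom j : ℕ) = g.toOrderHom j := by
  have htoN : y.toN = N.mk z hz :=
    toN_eq_iff.2 (subcomplex_eq_of_epi y (S.mk z) g h).symm
  suffices ∀ (w : X.N) (hw : y.toN = w) (g' : ⦋y.dim⦌ ⟶ ⦋w.dim⦌), Epi g' →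
      X.map g'.op w.simplex = y.simplex →
      ∀ j, (y.toNπ.toOrderHom j : ℕ) = g'.toOrderHom j from
    ⟨htoN, this _ htoN g ‹_› h⟩
  rintro w rfl g' _ hg' j
  rw [(existsUnique_toNπ rfl).unique ⟨inferInstance, hg'⟩
    ⟨inferInstance, map_toNπ_op_apply y⟩]

end SSet.S

namespace KBang

variable {X Y : SSet.{u}} {m : ℕ}

abbrev Rep (X : SSet.{u}) (m : ℕ) : Type u := Σ x : X.S, Fin (m + 1) → Fin (x.dim + 1)

def Rel (X : SSet.{u}) (m : ℕ) (a b : Rep X m) : Prop :=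
  ∃ α : ⦋a.1.dim⦌ ⟶ ⦋b.1.dim⦌,
    X.map α.op b.1.simplex = a.1.simplex ∧ b.2 = ⇑α.toOrderHom ∘ a.2

lemma Rep.ext {a b : Rep X m} (h₁ : a.1 = b.1) (h₂ : ∀ i, (a.2 i : ℕ) = b.2 i) : a = b := by
  obtain ⟨x, u⟩ := a
  obtain ⟨x', u'⟩ := b
  subst h₁
  exact Sigma.ext rfl (heq_of_eq (funext fun i => Fin.ext (h₂ i)))

def obj (X : SSet.{u}) : SSet.{u} where
  obj m := Quot (Rel X m.unop.len)
  map γ := TypeCat.ofHom <| Quot.map (fun a => ⟨a.1, a.2 ∘ γ.unop.toOrderHom⟩)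
    fun _ _ ⟨α, hx, hu⟩ => ⟨α, hx, by rw [hu]; rfl⟩
  map_id _ := by ext q; induction q using Quot.ind; rfl
  map_comp _ _ := by ext q; induction q using Quot.ind; rfl

def Rep.map (f : X ⟶ Y) (a : Rep X m) : Rep Y m := ⟨a.1.map f, a.2⟩

lemma Rel.map (f : X ⟶ Y) {a b : Rep X m} (h : Rel X m a b) : Rel Y m (a.map f) (b.map f) := by
  obtain ⟨α, hx, hu⟩ := h
  exact ⟨α, (NatTrans.naturality_apply f α.op _).symm.trans (congrArg (f.app _) hx), hu⟩

def functor : SSet.{u} ⥤ SSet.{u} where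
  obj := obj
  map f :=
    { app := fun _ => TypeCat.ofHom <| Quot.map (Rep.map f) fun _ _ => Rel.map f
      naturality := fun _ _ _ => by ext q; induction q using Quot.ind; rfl }
  map_id _ := by ext _ q; induction q using Quot.ind; rfl
  map_comp _ _ := by ext _ q; induction q using Quot.ind; rfl

def bpiSimplex {n : SimplexCategory} {m : SimplexCategoryᵒᵖ}
    (u : Fin (m.unop.len + 1) → Fin (n.len + 1)) : (Bpi.obj n).obj m where
  obj := u
  map _ := ⟨⟩
  map_id _ := rfl
  map_comp _ _ := rfl

def homEquiv (X Z : SSet.{0}) : (obj X ⟶ Z) ≃ (X ⟶ kSh Z) where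
  toFun F :=
    { app := fun p => TypeCat.ofHom fun x =>
        { app := fun m => TypeCat.ofHom fun σ =>
            F.app m (Quot.mk _ ⟨S.mk (dim := p.unop.len) x, σ.obj⟩)
          naturality := fun _ _ γ => by
            ext σ
            exact NatTrans.naturality_apply F γ
              (Quot.mk _ ⟨S.mk (dim := p.unop.len) x, σ.obj⟩) }
      naturality := fun _ _ h => by
        ext x
        apply NatTrans.ext; funext m; ext σ
        exact congrArg (F.app m) (Quot.sound ⟨h.unop, rfl, rfl⟩) }
  invFun φ :=
    { app := fun m => TypeCat.ofHom <| Quot.lift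
        (fun a => (φ.app (op ⦋a.1.dim⦌) a.1.simplex).app m (bpiSimplex a.2))
        (by
          rintro ⟨x, u⟩ ⟨x', u'⟩ ⟨α, hx, hu⟩
          dsimp only at α hx hu ⊢
          rw [hu, ← hx, NatTrans.naturality_apply φ α.op]
          exact congrArg ((φ.app _ x'.simplex).app m) (chaoticCA_ext _ _ fun _ => rfl))
      naturality := fun m m' γ => by
        ext q
        induction q using Quot.ind with | _ a =>
        exact (congrArg ((φ.app _ a.1.simplex).app m') (chaoticCA_ext _ _ fun _ => rfl)).trans
          (NatTrans.naturality_apply (φ.app _ a.1.simplex) γ (bpiSimplex a.2)) }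
  left_inv F := by
    ext m q
    induction q using Quot.ind
    rfl
  right_inv φ := by
    ext p x
    apply NatTrans.ext; funext m; ext σ
    exact congrArg ((φ.app p x).app m) (chaoticCA_ext _ _ fun _ => rfl)

def adjunction : functor.{0} ⊣ kShF :=
  Adjunction.mkOfHomEquiv
    { homEquiv := homEquiv
      homEquiv_naturality_left_symm := by
        intros
        ext m q
        induction q using Quot.ind
        rfl
      homEquiv_naturality_right := by
        intros
        rfl }

def stdSimplexCompIso : SSet.stdSimplex ⋙ functor.{0} ≅ Bpi :=
  NatIso.ofComponents
    (fun n => NatIso.ofComponents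
      (fun m =>
        { hom := TypeCat.ofHom <| Quot.lift
            (fun a => bpiSimplex (⇑a.1.simplex.down.toOrderHom ∘ a.2))
            (by
              rintro ⟨x, u⟩ ⟨x', u'⟩ ⟨α, hx, hu⟩
              dsimp only at α hx hu ⊢
              rw [hu, ← hx]
              rfl)
          inv := TypeCat.ofHom fun σ =>
            Quot.mk _ ⟨S.mk (dim := n.len) (ULift.up (𝟙 n)), σ.obj⟩
          hom_inv_id := by
            ext q
            induction q using Quot.ind with | _ a =>
            exact (Quot.sound ⟨a.1.simplex.down,
              congrArg ULift.up (Category.comp_id a.1.simplex.down), rfl⟩).symm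
          inv_hom_id := by
            ext σ
            exact chaoticCA_ext _ _ fun _ => rfl })
      (fun _ => by
        ext q
        induction q using Quot.ind
        exact chaoticCA_ext _ _ fun _ => rfl))
    (fun _ => by
      ext _ q
      induction q using Quot.ind
      exact chaoticCA_ext _ _ fun _ => rfl)

noncomputable def isoOfPreservesColimits (k : SSet.{0} ⥤ SSet.{0}) [PreservesColimits k]
    (e : SSet.stdSimplex ⋙ k ≅ Bpi) : k ≅ functor :=
  have := adjunction.leftAdjoint_preservesColimits
  Presheaf.uniqueExtensionAlongULiftYoneda k e.symm ≪≫
    (Presheaf.uniqueExtensionAlongULiftYoneda functor stdSimplexCompIso.symm).symm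

open SimplexCategory

/-- Reducible, so that instance search sees `a.face.dim` as `rangeDim a.2`. -/
noncomputable abbrev Rep.face (a : Rep X m) : X.S :=
  S.mk (X.map (rangeIncl a.2).op a.1.simplex)

noncomputable def Rep.normalForm (a : Rep X m) : Rep X m :=
  ⟨a.face.toN.toS, ⇑a.face.toNπ.toOrderHom ∘ toRange a.2⟩

lemma Rep.quot_mk_normalForm (a : Rep X m) : Quot.mk (Rel X m) a.normalForm = Quot.mk _ a :=
  (Quot.sound (a := ⟨a.face, toRange a.2⟩) ⟨a.face.toNπ, S.map_toNπ_op_apply _, rfl⟩).symm.trans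
    (Quot.sound ⟨rangeIncl a.2, rfl, (rangeIncl_comp_toRange a.2).symm⟩)

lemma Rep.normalForm_eq_of_rel {a b : Rep X m} (h : Rel X m a b) :
    a.normalForm = b.normalForm := by
  obtain ⟨α, hx, hu⟩ := h
  obtain ⟨σ, _, hσι, hσ⟩ := exists_epi_comp_eq (rangeIncl a.2 ≫ α) (rangeIncl b.2)
    (surjective_toRange a.2) (surjective_toRange b.2)
    (((congrArg (⇑α.toOrderHom ∘ ·) (rangeIncl_comp_toRange a.2)).trans hu.symm).trans
      (rangeIncl_comp_toRange b.2).symm)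
  have hface : X.map (σ ≫ b.face.toNπ).op b.face.toN.simplex = a.face.simplex := by
    rw [op_comp, Functor.map_comp_apply, S.map_toNπ_op_apply]
    change X.map σ.op (X.map (rangeIncl b.2).op b.1.simplex) =
      X.map (rangeIncl a.2).op a.1.simplex
    rw [← hx]
    simp only [← Functor.map_comp_apply, ← op_comp, hσι]
  obtain ⟨hN, hπ⟩ := a.face.toN_eq_and_toNπ_val_eq _ b.face.toN.nonDegenerate _ hface
  exact Rep.ext (congrArg N.toS hN) fun i => by simp [normalForm, hπ, hσ]

lemma Rep.normalForm_map (f : X ⟶ Y) [Mono f] (a : Rep X m) :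
    (a.map f).normalForm = a.normalForm.map f := by
  have hface : Y.map a.face.toNπ.op (f.app _ a.face.toN.simplex) = (a.map f).face.simplex := by
    rw [← NatTrans.naturality_apply, S.map_toNπ_op_apply]
    exact NatTrans.naturality_apply f _ _
  obtain ⟨hN, hπ⟩ := @S.toN_eq_and_toNπ_val_eq _ (a.map f).face _ _
    ((nonDegenerate_iff_of_mono f _).2 a.face.toN.nonDegenerate) a.face.toNπ
    (inferInstanceAs (Epi a.face.toNπ)) hface
  exact Rep.ext (congrArg N.toS hN) fun i => hπ _

lemma Rep.map_injective (f : X ⟶ Y) [Mono f] : Function.Injective (Rep.map f (m := m)) := by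
  rintro ⟨⟨x⟩, u⟩ ⟨⟨x'⟩, u'⟩ h
  have hx : S.mk (f.app _ x) = S.mk (f.app _ x') := congrArg Sigma.fst h
  obtain rfl := S.dim_eq_of_mk_eq hx
  refine Rep.ext ?_ fun i => congrArg (fun r : Rep Y m => (r.2 i : ℕ)) h
  rw [S.ext_iff] at hx ⊢
  exact (CategoryTheory.mono_iff_injective (f.app _)).1 inferInstance hx

noncomputable def normalFormQuot (X : SSet.{u}) (m : SimplexCategoryᵒᵖ) :
    (obj X).obj m → Rep X m.unop.len :=
  Quot.lift Rep.normalForm fun _ _ => Rep.normalForm_eq_of_rel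

instance : functor.{u}.PreservesMonomorphisms where
  preserves {X Y} f _ := by
    rw [NatTrans.mono_iff_mono_app]
    intro m
    rw [CategoryTheory.mono_iff_injective]
    have hcomm :
        normalFormQuot Y m ∘ (functor.map f).app m = Rep.map f ∘ normalFormQuot X m := by
      funext q
      induction q using Quot.ind with | _ a =>
      exact Rep.normalForm_map f a
    have hleft : LeftInverse (Quot.mk _) (normalFormQuot X m) := by
      intro q
      induction q using Quot.ind with | _ a =>
      exact Rep.quot_mk_normalForm a
    refine Injective.of_comp (f := normalFormQuot Y m) ?_
    rw [hcomm]
    exact (Rep.map_injective f).comp hleft.injective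

end KBang

lemma map_coprod_inl_ne_map_coprod_inr {C D : Type*} [Category C] [Category D] (k : D ⥤ C)
    [PreservesColimitsOfShape (Discrete WalkingPair) k] (A : D) [HasBinaryCoproduct A A]
    {T : C} {g₁ g₂ : k.obj A ⟶ T} (hg : g₁ ≠ g₂) :
    k.map (coprod.inl : A ⟶ A ⨿ A) ≠ k.map coprod.inr := by
  intro h
  obtain ⟨l, hl₁, hl₂⟩ := BinaryCofan.IsColimit.desc'
    (isColimitMapCoconeBinaryCofanEquiv k _ _ (isColimitOfPreserves k (coprodIsCoprod A A)))
    g₁ g₂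
  exact hg (hl₁.symm.trans ((congrArg (· ≫ l) h).trans hl₂))

lemma small_of_map_coprod_inl_ne_map_coprod_inr {C D : Type*} [Category.{v} C] [Category D]
    (k : D ⥤ C) {A : D} [HasBinaryCoproduct A A]
    (h : k.map (coprod.inl : A ⟶ A ⨿ A) ≠ k.map coprod.inr)
    (S : Type w) [HasCoproduct fun _ : S => A] : Small.{v} S := by
  classical
  refine small_of_injective (f := fun s => k.map (Sigma.ι (fun _ : S => A) s)) fun s s' hs => ?_
  by_contra hne
  let r : ∐ (fun _ : S => A) ⟶ A ⨿ A :=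
    Sigma.desc fun t => if t = s then coprod.inl else coprod.inr
  apply h
  simpa [r, Ne.symm hne, ← Functor.map_comp] using congrArg (· ≫ k.map r) hs

lemma Bpi_map_δ_zero_ne_one :
    Bpi.map (SimplexCategory.δ (0 : Fin 2)) ≠ Bpi.map (SimplexCategory.δ 1) := by
  intro h
  have := congrArg
    (fun g : Bpi.obj ⦋0⦌ ⟶ Bpi.obj ⦋1⦌ => (g.app (op ⦋0⦌) (spineEl ⦋0⦌)).obj 0) h
  change (SimplexCategory.δ (0 : Fin 2)).toOrderHom 0 = (SimplexCategory.δ 1).toOrderHom 0 at this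
  exact absurd this (by decide)

lemma univLE_of_preservesColimits (k : SSet.{w} ⥤ SSet.{0}) [PreservesColimits k]
    (e : SSet.stdSimplex ⋙ k ≅ Bpi) : UnivLE.{w, 0} :=
  ⟨fun S => small_of_map_coprod_inl_ne_map_coprod_inr k
    (map_coprod_inl_ne_map_coprod_inr k Δ[0]
      ((cancel_epi (e.hom.app ⦋0⦌)).ne.2 Bpi_map_δ_zero_ne_one)) S⟩

noncomputable def sSetULiftEquivalence [UnivLE.{w, 0}] : SSet.{0} ≌ SSet.{w} :=
  (uliftFunctor.{w, 0}.asEquivalence).congrRight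

noncomputable def stdSimplexCompULiftIso [UnivLE.{w, 0}] :
    SSet.stdSimplex.{0} ⋙ sSetULiftEquivalence.{w}.functor ≅ SSet.stdSimplex.{w} :=
  NatIso.ofComponents fun _ => NatIso.ofComponents fun _ =>
    { hom := TypeCat.ofHom fun x => ULift.up x.down.down
      inv := TypeCat.ofHom fun y => ULift.up (ULift.up y.down)
      hom_inv_id := rfl
      inv_hom_id := rfl }

lemma preservesMonomorphisms_of_preservesColimits (k : SSet.{w} ⥤ SSet.{0})
    [PreservesColimits k] (e : SSet.stdSimplex ⋙ k ≅ Bpi) : k.PreservesMonomorphisms := by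
  have := univLE_of_preservesColimits k e
  let E := sSetULiftEquivalence.{w}
  have : PreservesColimits E.functor := E.toAdjunction.leftAdjoint_preservesColimits
  have : (E.functor ⋙ k).PreservesMonomorphisms :=
    .of_iso (KBang.isoOfPreservesColimits (E.functor ⋙ k) ((Functor.associator _ _ _).symm ≪≫
      Functor.isoWhiskerRight stdSimplexCompULiftIso k ≪≫ e)).symm
  exact .of_iso (E.invFunIdAssoc k)

/-- The functor `k₁` (the colimit-preserving functor determined by
`k₁(Δⁿ) = Bπ(Δⁿ)`, i.e. the left Kan extension along `Δⁿ ↦ Bπ(Δⁿ)`)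
preserves monomorphisms of simplicial sets. -/
theorem kBang_preserves_mono (k : SSet ⥤ SSet) (hk : Limits.PreservesColimits k)
    (e : SSet.stdSimplex ⋙ k ≅ Bpi) :
    ∀ ⦃X Y : SSet⦄ (f : X ⟶ Y), Mono f → Mono (k.map f) := by
  intro X Y f _
  have := preservesMonomorphisms_of_preservesColimits k e
  exact k.map_mono f
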